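/- arXiv:1610.00238 — 7 statements merged into one kernel-verified Lean document; each statement's English description precedes it below -/
import Mathlib

section
/- Let a_1, a_2, …, a_n be positive integers satisfying a_1 = 1 and a_i ≤ a_{i+1} ≤ (∑_{j=1}^{i} a_j) + 1 for all i with 1 ≤ i ≤ n−1. Then for every integer ℓ with 1 ≤ ℓ ≤ ∑_{j=1}^{n} a_j there exists a sequence c_1, c_2, …, c_n with each c_j ∈ {0,1} such that ℓ = ∑_{j=1}^{n} c_j a_j. -/
lemma aux_key (a : ℕ → ℕ) (h1 : a 1 = 1) :
    ∀ n, 1 ≤ n →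
    (∀ i, 1 ≤ i → i + 1 ≤ n →
      a i ≤ a (i + 1) ∧ a (i + 1) ≤ (∑ j ∈ Finset.Icc 1 i, a j) + 1) →
    ∀ ℓ : ℕ, 1 ≤ ℓ → ℓ ≤ ∑ j ∈ Finset.Icc 1 n, a j →
      ∃ c : ℕ → ℕ, (∀ j, c j = 0 ∨ c j = 1) ∧
        ℓ = ∑ j ∈ Finset.Icc 1 n, c j * a j := by
  intro n hn
  induction n, hn using Nat.le_induction with
  | base =>
    intro _ ℓ hℓ1 hℓ2
    simp only [Finset.Icc_self, Finset.sum_singleton, h1] at hℓ2 ⊢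
    exact ⟨fun _ => 1, fun _ => Or.inr rfl, by simp; omega⟩
  | succ n hn ih =>
    intro hstep ℓ hℓ1 hℓ2
    have hstep' : ∀ i, 1 ≤ i → i + 1 ≤ n →
        a i ≤ a (i + 1) ∧ a (i + 1) ≤ (∑ j ∈ Finset.Icc 1 i, a j) + 1 :=
      fun i h1i h2i => hstep i h1i (by omega)
    have hsum : ∑ j ∈ Finset.Icc 1 (n + 1), a j
        = (∑ j ∈ Finset.Icc 1 n, a j) + a (n + 1) :=
      Finset.sum_Icc_succ_top (by omega) a
    by_cases hcase : ℓ ≤ ∑ j ∈ Finset.Icc 1 n, a j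
    · obtain ⟨c, hc01, hcsum⟩ := ih hstep' ℓ hℓ1 hcase
      refine ⟨fun j => if j ≤ n then c j else 0, fun j => ?_, ?_⟩
      · by_cases h : j ≤ n <;> simp [h, hc01 j]
      · rw [Finset.sum_Icc_succ_top (by omega : 1 ≤ n + 1)]
        beta_reduce
        rw [if_neg (by omega : ¬ n + 1 ≤ n), zero_mul, add_zero]
        rw [hcsum]
        exact Finset.sum_congr rfl fun j hj => by
          rw [if_pos (Finset.mem_Icc.mp hj).2]
    · push_neg at hcase
      have hub := (hstep n hn (le_refl _)).2
      by_cases hz : ℓ = a (n + 1)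
      · refine ⟨fun j => if j = n + 1 then 1 else 0, fun j => ?_, ?_⟩
        · by_cases h : j = n + 1 <;> simp [h]
        · rw [Finset.sum_Icc_succ_top (by omega : 1 ≤ n + 1)]
          beta_reduce
          rw [if_pos rfl, one_mul]
          have : ∑ j ∈ Finset.Icc 1 n, (if j = n + 1 then 1 else 0) * a j = 0 := by
            apply Finset.sum_eq_zero
            intro j hj
            rw [if_neg (by have := (Finset.mem_Icc.mp hj).2; omega), zero_mul]
          omega
      · have h1' : 1 ≤ ℓ - a (n + 1) := by omega
        have h2' : ℓ - a (n + 1) ≤ ∑ j ∈ Finset.Icc 1 n, a j := by omega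
        obtain ⟨c, hc01, hcsum⟩ := ih hstep' (ℓ - a (n + 1)) h1' h2'
        refine ⟨fun j => if j ≤ n then c j else 1, fun j => ?_, ?_⟩
        · by_cases h : j ≤ n <;> simp [h, hc01 j]
        · rw [Finset.sum_Icc_succ_top (by omega : 1 ≤ n + 1)]
          beta_reduce
          rw [if_neg (by omega : ¬ n + 1 ≤ n), one_mul]
          have : ∑ j ∈ Finset.Icc 1 n, (if j ≤ n then c j else 1) * a j
              = ∑ j ∈ Finset.Icc 1 n, c j * a j :=
            Finset.sum_congr rfl fun j hj => by rw [if_pos (Finset.mem_Icc.mp hj).2]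
          omega

/-- If `a 1, …, a n` are positive integers with `a 1 = 1` and
`a i ≤ a (i+1) ≤ (∑_{j=1}^i a j) + 1` for `1 ≤ i ≤ n − 1`, then every integer `ℓ` with
`1 ≤ ℓ ≤ ∑_{j=1}^n a j` can be written as `ℓ = ∑_{j=1}^n c j * a j` for a binary
sequence `c` (each `c j ∈ {0, 1}`). -/
theorem stmt_0 (n : ℕ) (hn : 1 ≤ n) (a : ℕ → ℕ)
    (hpos : ∀ i, 1 ≤ i → i ≤ n → 0 < a i)
    (h1 : a 1 = 1)
    (hstep : ∀ i, 1 ≤ i → i + 1 ≤ n →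
      a i ≤ a (i + 1) ∧ a (i + 1) ≤ (∑ j ∈ Finset.Icc 1 i, a j) + 1) :
    ∀ ℓ : ℕ, 1 ≤ ℓ → ℓ ≤ ∑ j ∈ Finset.Icc 1 n, a j →
      ∃ c : ℕ → ℕ, (∀ j, c j = 0 ∨ c j = 1) ∧
        ℓ = ∑ j ∈ Finset.Icc 1 n, c j * a j := by
  exact aux_key a h1 n hn hstep
end

section
/- Let G be a connected simple graph with vertex set V(G) = {u_1, u_2, …, u_n} and let f be an IC-coloring of G with f(u_i) < f(u_{i+1}) for all 1 ≤ i ≤ n−1. Suppose 1 ≤ i_1 < i_2 ≤ n, that f(u_{i_1}) = (∑_{j=1}^{i_1−1} f(u_j)) + 1, and that u_{i_1} and u_{i_2} are not adjacent in G. Then either f(u_{i_2}) ≤ (∑_{j=1}^{i_2−1} f(u_j)) − f(u_{i_1}), or else i_2 < n and f(u_{i_2+1}) ≤ f(u_{i_1}) + f(u_{i_2}). -/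
/-- A coloring `f : V(G) → ℕ` (positive-valued) is an IC-coloring if every integer
`k` with `1 ≤ k ≤ f(G)` is the `f`-sum of some nonempty vertex subset inducing a
connected subgraph. -/
def IsICColoring {α : Type*} [Fintype α] (G : SimpleGraph α) (f : α → ℕ) : Prop :=
  (∀ v, 0 < f v) ∧
    ∀ k : ℕ, 1 ≤ k → k ≤ ∑ v, f v →
      ∃ S : Finset α, S.Nonempty ∧ (G.induce (S : Set α)).Connected ∧
        ∑ v ∈ S, f v = k

lemma pair_disconnected {α : Type*} (G : SimpleGraph α) (a b : α) (hab : a ≠ b)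
    (hadj : ¬ G.Adj a b) : ¬ (G.induce ({a, b} : Set α)).Connected := by
  intro h
  have hbot : (G.induce ({a, b} : Set α)) = ⊥ := by
    ext x y
    simp only [SimpleGraph.comap_adj, Function.Embedding.coe_subtype,
      SimpleGraph.bot_adj, iff_false]
    intro hxy
    have hx := x.2
    have hy := y.2
    simp only [Set.mem_insert_iff, Set.mem_singleton_iff] at hx hy
    rcases hx with hx | hx <;> rcases hy with hy | hy <;> rw [hx, hy] at hxy
    · exact G.irrefl hxy
    · exact hadj hxy
    · exact hadj hxy.symm
    · exact G.irrefl hxy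
  have hr := h.preconnected ⟨a, by simp⟩ ⟨b, by simp⟩
  rw [hbot] at hr
  exact hab (congrArg Subtype.val (SimpleGraph.reachable_bot.mp hr))

/-- Let `G` be connected with vertices `u 1, …, u n` and `f` an
IC-coloring with `f (u i) < f (u (i+1))` for all `i`.  If `1 ≤ i₁ < i₂ ≤ n`,
`f (u i₁) = (∑_{j=1}^{i₁−1} f (u j)) + 1` and `u i₁`, `u i₂` are not adjacent, then
either `f (u i₂) ≤ (∑_{j=1}^{i₂−1} f (u j)) − f (u i₁)`, or `i₂ < n` and
`f (u (i₂+1)) ≤ f (u i₁) + f (u i₂)`. -/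
theorem stmt_3 {α : Type*} [Fintype α] (n : ℕ) (hcard : Fintype.card α = n)
    (hn : 1 ≤ n) (G : SimpleGraph α) (hG : G.Connected)
    (u : ℕ → α) (hu : Set.BijOn u (Set.Icc 1 n) Set.univ)
    (f : α → ℕ) (hf : IsICColoring G f)
    (hmono : ∀ i, 1 ≤ i → i + 1 ≤ n → f (u i) < f (u (i + 1)))
    (i₁ i₂ : ℕ) (hi₁ : 1 ≤ i₁) (h12 : i₁ < i₂) (hi₂ : i₂ ≤ n)
    (hval : f (u i₁) = (∑ j ∈ Finset.Icc 1 (i₁ - 1), f (u j)) + 1)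
    (hadj : ¬ G.Adj (u i₁) (u i₂)) :
    f (u i₂) ≤ (∑ j ∈ Finset.Icc 1 (i₂ - 1), f (u j)) - f (u i₁) ∨
      (i₂ < n ∧ f (u (i₂ + 1)) ≤ f (u i₁) + f (u i₂)) := by
  classical
  by_contra hcon
  push_neg at hcon
  obtain ⟨h1, h2⟩ := hcon
  have hfpos := hf.1
  have hmem1 : i₁ ∈ Set.Icc 1 n := Set.mem_Icc.mpr ⟨hi₁, by omega⟩
  have hmem2 : i₂ ∈ Set.Icc 1 n := Set.mem_Icc.mpr ⟨by omega, hi₂⟩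
  -- strict monotonicity across all indices
  have hmono' : ∀ j i, 1 ≤ i → i < j → j ≤ n → f (u i) < f (u j) := by
    intro j
    induction j with
    | zero => intro i _ hij _; exact absurd hij (Nat.not_lt_zero i)
    | succ m ih =>
      intro i hi hij hjn
      rcases eq_or_lt_of_le (Nat.lt_succ_iff.mp hij) with h | h
      · subst h; exact hmono i hi hjn
      · exact lt_trans (ih i hi h (by omega)) (hmono m (by omega) hjn)
  have hne12 : u i₁ ≠ u i₂ := fun h => (by omega : i₁ ≠ i₂) (hu.injOn hmem1 hmem2 h)
  have hk_le : f (u i₁) + f (u i₂) ≤ ∑ v, f v := by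
    calc f (u i₁) + f (u i₂) = ∑ v ∈ ({u i₁, u i₂} : Finset α), f v :=
          (Finset.sum_pair hne12).symm
      _ ≤ ∑ v, f v := Finset.sum_le_sum_of_subset (Finset.subset_univ _)
  obtain ⟨S, hSne, hSconn, hSsum⟩ := hf.2 (f (u i₁) + f (u i₂))
    (by have := hfpos (u i₁); omega) hk_le
  -- every member of S has index at most i₂
  have hA : ∀ v ∈ S, ∃ m, 1 ≤ m ∧ m ≤ i₂ ∧ u m = v := by
    intro v hv
    obtain ⟨m, hm, rfl⟩ := hu.surjOn (Set.mem_univ v)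
    have hm1 : 1 ≤ m := hm.1
    have hmn : m ≤ n := hm.2
    refine ⟨m, hm1, ?_, rfl⟩
    by_contra hmi
    push_neg at hmi
    have h2' := h2 (by omega)
    have hle : f (u (i₂ + 1)) ≤ f (u m) := by
      rcases eq_or_lt_of_le (show i₂ + 1 ≤ m by omega) with h | h
      · rw [h]
      · exact le_of_lt (hmono' m (i₂ + 1) (by omega) h hmn)
    have hfv : f (u m) ≤ ∑ v ∈ S, f v :=
      Finset.single_le_sum (fun _ _ => Nat.zero_le _) hv
    rw [hSsum] at hfv
    omega
  -- u i₂ is not in S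
  have hB : u i₂ ∉ S := by
    intro hi2S
    have hT : ∑ v ∈ S.erase (u i₂), f v = f (u i₁) := by
      have := Finset.sum_erase_add S f hi2S
      omega
    by_cases h1S : u i₁ ∈ S
    · have hT1 : u i₁ ∈ S.erase (u i₂) := Finset.mem_erase.mpr ⟨hne12, h1S⟩
      have h0 : ∑ v ∈ (S.erase (u i₂)).erase (u i₁), f v = 0 := by
        have := Finset.sum_erase_add (S.erase (u i₂)) f hT1
        omega
      have hempty : (S.erase (u i₂)).erase (u i₁) = ∅ := by
        by_contra hne
        obtain ⟨x, hx⟩ := Finset.nonempty_iff_ne_empty.mpr hne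
        have hx1 : 0 < f x := hfpos x
        have hx2 : f x ≤ ∑ v ∈ (S.erase (u i₂)).erase (u i₁), f v :=
          Finset.single_le_sum (fun _ _ => Nat.zero_le _) hx
        rw [h0] at hx2
        omega
      have hS : S = {u i₂, u i₁} := by
        have hT' : S.erase (u i₂) = {u i₁} := by
          rw [← Finset.insert_erase hT1, hempty]; rfl
        rw [← Finset.insert_erase hi2S, hT']
      have hcoe : (S : Set α) = ({u i₂, u i₁} : Set α) := by rw [hS]; simp
      rw [hcoe] at hSconn
      exact pair_disconnected G (u i₂) (u i₁) hne12.symm (fun h => hadj h.symm) hSconn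
    · have hTsub : S.erase (u i₂) ⊆ (Finset.Icc 1 (i₁ - 1)).image u := by
        intro v hv
        have hvS : v ∈ S := Finset.mem_of_mem_erase hv
        obtain ⟨m, hm1, hm2, rfl⟩ := hA v hvS
        have hmne2 : m ≠ i₂ := by
          intro h; exact (Finset.mem_erase.mp hv).1 (by rw [h])
        have hmne1 : m ≠ i₁ := by
          intro h; rw [h] at hvS; exact h1S hvS
        have hmlt : m < i₁ := by
          by_contra hge
          push_neg at hge
          have hlt : f (u i₁) < f (u m) := hmono' m i₁ hi₁ (by omega) (by omega)
          have hle : f (u m) ≤ ∑ v ∈ S.erase (u i₂), f v :=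
            Finset.single_le_sum (fun _ _ => Nat.zero_le _) hv
          rw [hT] at hle
          omega
        exact Finset.mem_image.mpr ⟨m, Finset.mem_Icc.mpr ⟨hm1, by omega⟩, rfl⟩
      have hsum_img : ∑ v ∈ (Finset.Icc 1 (i₁ - 1)).image u, f v
          = ∑ j ∈ Finset.Icc 1 (i₁ - 1), f (u j) := by
        apply Finset.sum_image
        intro x hx y hy hxy
        have hx' := Finset.mem_Icc.mp hx
        have hy' := Finset.mem_Icc.mp hy
        exact hu.injOn (Set.mem_Icc.mpr ⟨hx'.1, by omega⟩)
          (Set.mem_Icc.mpr ⟨hy'.1, by omega⟩) hxy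
      have hle : f (u i₁) ≤ ∑ j ∈ Finset.Icc 1 (i₁ - 1), f (u j) := by
        rw [← hT, ← hsum_img]
        exact Finset.sum_le_sum_of_subset hTsub
      omega
  -- hence S lies in the first i₂ - 1 vertices
  have hSsub : S ⊆ (Finset.Icc 1 (i₂ - 1)).image u := by
    intro v hv
    obtain ⟨m, hm1, hm2, rfl⟩ := hA v hv
    have : m ≠ i₂ := by
      intro h; rw [h] at hv; exact hB hv
    exact Finset.mem_image.mpr ⟨m, Finset.mem_Icc.mpr ⟨hm1, by omega⟩, rfl⟩
  have hsum_img : ∑ v ∈ (Finset.Icc 1 (i₂ - 1)).image u, f v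
      = ∑ j ∈ Finset.Icc 1 (i₂ - 1), f (u j) := by
    apply Finset.sum_image
    intro x hx y hy hxy
    have hx' := Finset.mem_Icc.mp hx
    have hy' := Finset.mem_Icc.mp hy
    exact hu.injOn (Set.mem_Icc.mpr ⟨hx'.1, by omega⟩)
      (Set.mem_Icc.mpr ⟨hy'.1, by omega⟩) hxy
  have hk2 : f (u i₁) + f (u i₂) ≤ ∑ j ∈ Finset.Icc 1 (i₂ - 1), f (u j) := by
    rw [← hSsum, ← hsum_img]
    exact Finset.sum_le_sum_of_subset hSsub
  omega
end

section
/- Let f be an IC-coloring of a connected simple graph G. Suppose G has exactly ℓ nonempty vertex subsets that induce a connected subgraph, and suppose there exist 2k pairwise distinct nonempty vertex subsets S_1, T_1, S_2, T_2, …, S_k, T_k, each inducing a connected subgraph of G, such that f(S_i) = f(T_i) for all 1 ≤ i ≤ k. Then f(G) ≤ ℓ − k. -/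
/-- Let `f` be an IC-coloring of a connected graph `G` having exactly
`ℓ` nonempty vertex subsets inducing a connected subgraph.  If there are `2k` pairwise
distinct nonempty connected-inducing subsets `S 1, T 1, …, S k, T k` with
`f (S i) = f (T i)` for all `i`, then `f(G) ≤ ℓ − k`. -/
theorem stmt_5 {α : Type*} [Fintype α] (G : SimpleGraph α) (hG : G.Connected)
    (f : α → ℕ) (hf : IsICColoring G f) (ℓ k : ℕ)
    (hℓ : {S : Finset α | S.Nonempty ∧ (G.induce (S : Set α)).Connected}.ncard = ℓ)
    (S T : Fin k → Finset α)
    (hS : ∀ i, (S i).Nonempty ∧ (G.induce ((S i : Finset α) : Set α)).Connected)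
    (hT : ∀ i, (T i).Nonempty ∧ (G.induce ((T i : Finset α) : Set α)).Connected)
    (hSinj : Function.Injective S) (hTinj : Function.Injective T)
    (hST : ∀ i j, S i ≠ T j)
    (heq : ∀ i, ∑ v ∈ S i, f v = ∑ v ∈ T i, f v) :
    ∑ v, f v ≤ ℓ - k := by
  classical
  set g : Finset α → ℕ := fun A => ∑ v ∈ A, f v with hg
  set C : Finset (Finset α) :=
    Finset.univ.filter (fun A => A.Nonempty ∧ (G.induce (A : Set α)).Connected) with hCdef
  have hC : C.card = ℓ := by
    rw [← hℓ, ← Set.ncard_coe_finset]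
    congr 1
    ext A
    simp [hCdef]
  have hsub : Finset.Icc 1 (∑ v, f v) ⊆ C.image g := by
    intro n hn
    rw [Finset.mem_Icc] at hn
    obtain ⟨A, hA1, hA2, hA3⟩ := hf.2 n hn.1 hn.2
    exact Finset.mem_image.mpr ⟨A, by simp [hCdef, hA1, hA2], hA3⟩
  have h1 : ∑ v, f v ≤ (C.image g).card := by
    calc ∑ v, f v = (Finset.Icc 1 (∑ v, f v)).card := by simp
    _ ≤ _ := Finset.card_le_card hsub
  set Sset : Finset (Finset α) := Finset.univ.image S with hSsetdef
  have hSsub : Sset ⊆ C := by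
    intro A hA
    rw [hSsetdef, Finset.mem_image] at hA
    obtain ⟨i, _, rfl⟩ := hA
    simp [hCdef, (hS i).1, (hS i).2]
  have hScard : Sset.card = k := by
    rw [hSsetdef, Finset.card_image_of_injective _ hSinj, Finset.card_univ, Fintype.card_fin]
  have himg : C.image g ⊆ (C \ Sset).image g := by
    intro n hn
    rw [Finset.mem_image] at hn
    obtain ⟨A, hA, rfl⟩ := hn
    by_cases hAS : A ∈ Sset
    · rw [hSsetdef, Finset.mem_image] at hAS
      obtain ⟨i, _, rfl⟩ := hAS
      refine Finset.mem_image.mpr ⟨T i, ?_, (heq i).symm⟩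
      rw [Finset.mem_sdiff]
      refine ⟨by simp [hCdef, (hT i).1, (hT i).2], ?_⟩
      rw [hSsetdef, Finset.mem_image]
      rintro ⟨j, _, hj⟩
      exact hST j i hj
    · exact Finset.mem_image.mpr ⟨A, Finset.mem_sdiff.mpr ⟨hA, hAS⟩, rfl⟩
  calc ∑ v, f v ≤ (C.image g).card := h1
    _ ≤ ((C \ Sset).image g).card := Finset.card_le_card himg
    _ ≤ (C \ Sset).card := Finset.card_image_le
    _ = ℓ - k := by rw [Finset.card_sdiff_of_subset hSsub, hC, hScard]
end

section
/- Let G be a connected simple graph, let m ≥ 1, and let g be an IC-coloring of G. Then there exists an IC-coloring f of the join O_m ∨ G such that f(O_m ∨ G) = 2^m · g(G) + 1. -/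
/-- The join `H₀ ∨ H₁` of two graphs: all edges of `H₀`, all edges of `H₁`, and all
pairs with one endpoint in each. -/
def graphJoin {α β : Type*} (G : SimpleGraph α) (H : SimpleGraph β) :
    SimpleGraph (α ⊕ β) where
  Adj x y :=
    match x, y with
    | Sum.inl a, Sum.inl b => G.Adj a b
    | Sum.inr a, Sum.inr b => H.Adj a b
    | Sum.inl _, Sum.inr _ => True
    | Sum.inr _, Sum.inl _ => True
  symm := by
    constructor
    rintro (a | a) (b | b) h
    · exact G.symm.symm _ _ h
    · trivial
    · trivial
    · exact H.symm.symm _ _ h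
  loopless := by
    constructor
    rintro (a | a) h
    · exact G.loopless.irrefl a h
    · exact H.loopless.irrefl a h

/-- The IC-index `M(G)`: the maximum of `f(G)` over all IC-colorings `f` of `G`. -/
noncomputable def ICIndex {α : Type*} [Fintype α] (G : SimpleGraph α) : ℕ :=
  sSup {t | ∃ f : α → ℕ, IsICColoring G f ∧ ∑ v, f v = t}

/-- `K_{1(n),m} = O_m ∨ K_n`: the complete `(n+1)`-partite graph with `n` parts of
size one and one part (`V₀ = Fin m`, the left summand) of size `m`. -/
def K1nm (m n : ℕ) : SimpleGraph (Fin m ⊕ Fin n) :=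
  graphJoin (⊥ : SimpleGraph (Fin m)) (⊤ : SimpleGraph (Fin n))

/-! Let `N = g(G)` and give the vertices of `O_m` the weights `N, 2N, …, 2^(m-2) N` and
`2^(m-1) N + 1`. In the join, any set meeting both `O_m` and `G` induces a connected subgraph,
so the total weight of any nonempty set of vertices of `O_m`, plus any `b ∈ [1, N]`, is attained.
Binary expansion then covers `(N, 2^(m-1) N]` without the top vertex and
`(2^(m-1) N + 1, 2^m N + 1]` with it, the top vertex alone gives `2^(m-1) N + 1`, and `[1, N]`
is covered inside `G`. -/

def IsConnectedSum {α : Type*} (G : SimpleGraph α) (f : α → ℕ) (k : ℕ) : Prop :=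
  ∃ S : Finset α, S.Nonempty ∧ (G.induce (S : Set α)).Connected ∧ ∑ v ∈ S, f v = k

section Join

variable {α β : Type*} (H : SimpleGraph β) (G : SimpleGraph α)

lemma graphJoin_induce_image_inr_connected {t : Set α} (ht : (G.induce t).Connected) :
    ((graphJoin H G).induce (Sum.inr '' t)).Connected :=
  (SimpleGraph.Iso.connected_iff
    ⟨Equiv.Set.image Sum.inr t Sum.inr_injective, Iff.rfl⟩).mp ht

lemma graphJoin_induce_connected {s : Set (β ⊕ α)} (hl : ∃ b, Sum.inl b ∈ s)
    (hr : ∃ a, Sum.inr a ∈ s) : ((graphJoin H G).induce s).Connected := by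
  obtain ⟨b, hb⟩ := hl
  obtain ⟨a, ha⟩ := hr
  have reach : ∀ x : s, ((graphJoin H G).induce s).Reachable x ⟨Sum.inr a, ha⟩ := by
    rintro ⟨x | x, hx⟩
    · exact SimpleGraph.Adj.reachable (G := (graphJoin H G).induce s) trivial
    · exact (SimpleGraph.Adj.reachable (G := (graphJoin H G).induce s) (u := ⟨Sum.inr x, hx⟩)
        (v := ⟨Sum.inl b, hb⟩) trivial).trans (SimpleGraph.Adj.reachable trivial)
  exact (SimpleGraph.connected_iff _).mpr
    ⟨fun x y => (reach x).trans (reach y).symm, ⟨⟨_, ha⟩⟩⟩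

variable {H G} {f : α → ℕ}

lemma isConnectedSum_apply (v : α) : IsConnectedSum G f (f v) :=
  ⟨{v}, Finset.singleton_nonempty v, by
    rw [Finset.coe_singleton]
    exact SimpleGraph.Subgraph.singletonSubgraph_connected.induce_verts,
    Finset.sum_singleton f v⟩

lemma IsConnectedSum.graphJoin_inr {k : ℕ} (h : β → ℕ) (hk : IsConnectedSum G f k) :
    IsConnectedSum (graphJoin H G) (Sum.elim h f) k := by
  obtain ⟨B, hB, hconn, rfl⟩ := hk
  refine ⟨B.map Function.Embedding.inr, hB.map, ?_, by simp⟩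
  rw [Finset.coe_map]
  exact graphJoin_induce_image_inr_connected H G hconn

lemma isConnectedSum_graphJoin_sum_add (h : β → ℕ) {A : Finset β} {B : Finset α}
    (hA : A.Nonempty) (hB : B.Nonempty) :
    IsConnectedSum (graphJoin H G) (Sum.elim h f) (∑ i ∈ A, h i + ∑ v ∈ B, f v) := by
  obtain ⟨b, hb⟩ := hA
  obtain ⟨a, ha⟩ := hB
  refine ⟨A.disjSum B, ⟨_, Finset.inl_mem_disjSum.mpr hb⟩, ?_, Finset.sum_disjSum _ _ _⟩
  exact graphJoin_induce_connected H G ⟨b, Finset.inl_mem_disjSum.mpr hb⟩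
    ⟨a, Finset.inr_mem_disjSum.mpr ha⟩

end Join

lemma exists_finset_sum_two_pow_eq {n j : ℕ} (hj : j < 2 ^ n) :
    ∃ A : Finset (Fin n), ∑ i ∈ A, 2 ^ (i : ℕ) = j := by
  refine ⟨Finset.univ.filter (fun i : Fin n => (i : ℕ) ∈ j.bitIndices), ?_⟩
  have hmap :
      (Finset.univ.filter (fun i : Fin n => (i : ℕ) ∈ j.bitIndices)).map Fin.valEmbedding =
        j.bitIndices.toFinset := by
    ext i
    simp only [Finset.mem_map, Finset.mem_filter, Finset.mem_univ, true_and, Fin.valEmbedding_apply,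
      List.mem_toFinset]
    refine ⟨fun ⟨i, hi, he⟩ => he ▸ hi, fun hi => ⟨⟨i, ?_⟩, hi, rfl⟩⟩
    exact (Nat.pow_lt_pow_iff_right (by norm_num)).mp
      ((Nat.two_pow_le_of_mem_bitIndices hi).trans_lt hj)
  refine (Finset.sum_map _ Fin.valEmbedding (2 ^ ·)).symm.trans ?_
  rw [hmap, Finset.sum_toFinset_bitIndices_two_pow]

lemma Nat.exists_eq_mul_add_of_pos {N k : ℕ} (hN : 0 < N) (hk : 0 < k) :
    ∃ j b, 0 < b ∧ b ≤ N ∧ k = j * N + b :=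
  ⟨(k - 1) / N, (k - 1) % N + 1, by omega, Nat.mod_lt _ hN,
    by have := Nat.div_add_mod' (k - 1) N; omega⟩

def powWeights (n N : ℕ) : Fin (n + 1) → ℕ :=
  Fin.snoc (fun i : Fin n => 2 ^ (i : ℕ) * N) (2 ^ n * N + 1)

section powWeights

variable {n N : ℕ}

lemma powWeights_pos (hN : 0 < N) (i : Fin (n + 1)) : 0 < powWeights n N i := by
  induction i using Fin.lastCases with
  | last => simp [powWeights]
  | cast i => simpa [powWeights] using hN

lemma sum_powWeights_add : ∑ i, powWeights n N i + N = 2 ^ (n + 1) * N + 1 := by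
  have hgeom : ∑ i : Fin n, 2 ^ (i : ℕ) + 1 = 2 ^ n := by
    rw [Fin.sum_univ_eq_sum_range (2 ^ ·), Nat.geomSum_eq le_rfl]
    have := n.one_le_two_pow
    omega
  simp only [Fin.sum_univ_castSucc, powWeights, Fin.snoc_castSucc, Fin.snoc_last,
    ← Finset.sum_mul]
  rw [pow_succ, ← hgeom]
  ring

lemma sum_powWeights_map_castSucc (A : Finset (Fin n)) :
    ∑ i ∈ A.map Fin.castSuccEmb, powWeights n N i = (∑ i ∈ A, 2 ^ (i : ℕ)) * N := by
  simp [powWeights, Finset.sum_mul]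

lemma sum_powWeights_insert_last (A : Finset (Fin n)) :
    ∑ i ∈ insert (Fin.last n) (A.map Fin.castSuccEmb), powWeights n N i =
      (∑ i ∈ A, 2 ^ (i : ℕ)) * N + (2 ^ n * N + 1) := by
  rw [Finset.sum_insert (by simp [Fin.castSucc_ne_last]), sum_powWeights_map_castSucc, add_comm]
  simp [powWeights]

end powWeights

section Coloring

variable {α : Type*} [Fintype α] {G : SimpleGraph α} {g : α → ℕ} {n : ℕ}
  (H : SimpleGraph (Fin (n + 1)))

lemma sum_elim_powWeights :
    ∑ v, Sum.elim (powWeights n (∑ v, g v)) g v = 2 ^ (n + 1) * ∑ v, g v + 1 := by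
  rw [Fintype.sum_sum_type]
  exact sum_powWeights_add

lemma IsICColoring.isConnectedSum_powWeights_add (hg : IsICColoring G g) (N : ℕ)
    {A : Finset (Fin (n + 1))} (hA : A.Nonempty) {b : ℕ} (hb : 0 < b) (hbN : b ≤ ∑ v, g v) :
    IsConnectedSum (graphJoin H G) (Sum.elim (powWeights n N) g)
      (∑ i ∈ A, powWeights n N i + b) := by
  obtain ⟨B, hB, -, rfl⟩ := hg.2 b hb hbN
  exact isConnectedSum_graphJoin_sum_add _ hA hB

lemma IsICColoring.isConnectedSum_powWeights_castSucc (hg : IsICColoring G g) (N : ℕ)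
    {j b : ℕ} (hj0 : j ≠ 0) (hj : j < 2 ^ n) (hb : 0 < b) (hbN : b ≤ ∑ v, g v) :
    IsConnectedSum (graphJoin H G) (Sum.elim (powWeights n N) g) (j * N + b) := by
  obtain ⟨A, rfl⟩ := exists_finset_sum_two_pow_eq hj
  rw [← sum_powWeights_map_castSucc]
  exact hg.isConnectedSum_powWeights_add H N (Finset.nonempty_of_sum_ne_zero hj0).map hb hbN

lemma IsICColoring.isConnectedSum_powWeights_last (hg : IsICColoring G g) (N : ℕ)
    {j b : ℕ} (hj : j < 2 ^ n) (hb : 0 < b) (hbN : b ≤ ∑ v, g v) :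
    IsConnectedSum (graphJoin H G) (Sum.elim (powWeights n N) g)
      (j * N + (2 ^ n * N + 1) + b) := by
  obtain ⟨A, rfl⟩ := exists_finset_sum_two_pow_eq hj
  rw [← sum_powWeights_insert_last]
  exact hg.isConnectedSum_powWeights_add H N (Finset.insert_nonempty _ _) hb hbN

lemma IsICColoring.graphJoin_powWeights [Nonempty α] (hg : IsICColoring G g) :
    IsICColoring (graphJoin H G) (Sum.elim (powWeights n (∑ v, g v)) g) := by
  rw [IsICColoring, sum_elim_powWeights]
  have hN : 0 < ∑ v, g v := Finset.sum_pos (fun v _ => hg.1 v) Finset.univ_nonempty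
  generalize hgN : ∑ v, g v = N at hN ⊢
  refine ⟨Sum.forall.2 ⟨powWeights_pos hN, hg.1⟩, fun k hk hkT => ?_⟩
  show IsConnectedSum (graphJoin H G) (Sum.elim (powWeights n N) g) k
  have hT : 2 ^ (n + 1) * N = 2 ^ n * N + 2 ^ n * N := by ring
  obtain hkN | hNk := le_or_gt k N
  · exact IsConnectedSum.graphJoin_inr _ (hg.2 k hk (by omega))
  obtain hkP | hPk := le_or_gt k (2 ^ n * N)
  · obtain ⟨j, b, hb, hbN, rfl⟩ := Nat.exists_eq_mul_add_of_pos hN (k := k) (by omega)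
    exact hg.isConnectedSum_powWeights_castSucc H N (by rintro rfl; omega)
      (Nat.lt_of_mul_lt_mul_right (a := N) (by omega)) hb (by omega)
  obtain rfl | hPk := (Nat.succ_le_of_lt hPk).eq_or_lt
  · convert isConnectedSum_apply (Sum.inl (Fin.last n)) using 1
    simp [powWeights]
  obtain ⟨j, b, hb, hbN, hk⟩ := Nat.exists_eq_mul_add_of_pos hN (k := k - (2 ^ n * N + 1))
    (by omega)
  convert hg.isConnectedSum_powWeights_last H N (j := j)
    (Nat.lt_of_mul_lt_mul_right (a := N) (by omega)) hb (by omega) using 1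
  omega

end Coloring

/-- If `g` is an IC-coloring of a connected graph `G` and `m ≥ 1`,
then there is an IC-coloring `f` of `O_m ∨ G` with `f(O_m ∨ G) = 2^m · g(G) + 1`. -/
theorem stmt_6 {α : Type*} [Fintype α] (G : SimpleGraph α) (hG : G.Connected)
    (m : ℕ) (hm : 1 ≤ m) (g : α → ℕ) (hg : IsICColoring G g) :
    ∃ f : Fin m ⊕ α → ℕ,
      IsICColoring (graphJoin (⊥ : SimpleGraph (Fin m)) G) f ∧
        ∑ v, f v = 2 ^ m * (∑ v, g v) + 1 := by
  obtain ⟨n, rfl⟩ : ∃ n, m = n + 1 := ⟨m - 1, by omega⟩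
  have := hG.nonempty
  exact ⟨_, hg.graphJoin_powWeights ⊥, sum_elim_powWeights⟩
end

section
/- For all m ≥ 1 and n ≥ 1, the IC-index of the complete (n+1)-partite graph K_{1(n),m} satisfies M(K_{1(n),m}) ≥ 2^{m+n} − 2^m + 1. -/
open Finset

theorem Nat.sum_range_filter_testBit (q m : ℕ) :
    ∑ i ∈ range m with q.testBit i, 2 ^ i = q % 2 ^ m := by
  induction m with
  | zero => simp [Nat.mod_one]
  | succ m ih =>
    rw [sum_filter, sum_range_succ, ← sum_filter, ih, Nat.pow_succ, Nat.mod_mul,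
      Nat.testBit_eq_decide_div_mod_eq]
    rcases Nat.mod_two_eq_zero_or_one (q / 2 ^ m) with h | h <;> simp [h]

theorem Fin.sum_filter_testBit {m q : ℕ} (hq : q < 2 ^ m) :
    ∑ j ∈ univ.filter (fun j : Fin m => q.testBit j), 2 ^ (j : ℕ) = q := by
  have h := Nat.sum_range_filter_testBit q m
  rw [sum_filter] at h ⊢
  rw [Fin.sum_univ_eq_sum_range (fun j => if q.testBit j then 2 ^ j else 0), h,
    Nat.mod_eq_of_lt hq]

theorem Fin.sum_filter_testBit_ite_last {m q : ℕ} (hm : 1 ≤ m) (hq : q < 2 ^ m) :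
    ∑ j ∈ univ.filter (fun j : Fin m => q.testBit j), (if (j : ℕ) = m - 1 then 1 else 0) =
      if 2 ^ (m - 1) ≤ q then 1 else 0 := by
  have htop : q.testBit (m - 1) ↔ 2 ^ (m - 1) ≤ q :=
    ⟨Nat.ge_two_pow_of_testBit, fun h =>
      Nat.testBit_of_two_pow_le_and_two_pow_add_one_gt h (by rwa [Nat.sub_add_cancel hm])⟩
  have hlast (j : Fin m) : (j : ℕ) = m - 1 ↔ ⟨m - 1, by omega⟩ = j := by
    rw [Fin.ext_iff, eq_comm]
  simp only [hlast, sum_ite_eq, mem_filter, mem_univ, true_and, htop]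

theorem SimpleGraph.induce_connected_of_forall_adj {V : Type*} (G : SimpleGraph V) {s : Set V}
    {c : V} (hc : c ∈ s) (hadj : ∀ v ∈ s, v ≠ c → G.Adj c v) : (G.induce s).Connected := by
  refine G.induce_connected_of_patches c hc fun {v} hv => ⟨s, subset_rfl, hc, hv, ?_⟩
  by_cases hvc : v = c
  · subst hvc; rfl
  · exact SimpleGraph.Adj.reachable (hadj v hv hvc)

theorem K1nm_induce_connected_of_inr_mem {m n : ℕ} {S : Finset (Fin m ⊕ Fin n)} {i : Fin n}
    (hi : Sum.inr i ∈ S) : ((K1nm m n).induce (S : Set (Fin m ⊕ Fin n))).Connected := by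
  refine (K1nm m n).induce_connected_of_forall_adj hi ?_
  rintro (j | j) - hj
  · trivial
  · exact (SimpleGraph.top_adj _ _).mpr fun h => hj (h ▸ rfl)

theorem IsICColoring.sum_le_two_pow_card {α : Type*} [Fintype α] {G : SimpleGraph α}
    {f : α → ℕ} (hf : IsICColoring G f) : ∑ v, f v ≤ 2 ^ Fintype.card α := by
  classical
  calc ∑ v, f v = #(Icc 1 (∑ v, f v)) := by simp
    _ ≤ #((univ : Finset (Finset α)).image fun S => ∑ v ∈ S, f v) := by
      refine card_le_card fun k hk => ?_
      obtain ⟨hk1, hk2⟩ := mem_Icc.mp hk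
      obtain ⟨S, -, -, hS⟩ := hf.2 k hk1 hk2
      exact mem_image.mpr ⟨S, mem_univ S, hS⟩
    _ ≤ #(univ : Finset (Finset α)) := card_image_le
    _ = 2 ^ Fintype.card α := by simp [Fintype.card_finset]

theorem IsICColoring.sum_le_ICIndex {α : Type*} [Fintype α] {G : SimpleGraph α}
    {f : α → ℕ} (hf : IsICColoring G f) : ∑ v, f v ≤ ICIndex G := by
  refine le_csSup ⟨2 ^ Fintype.card α, ?_⟩ ⟨f, hf, rfl⟩
  rintro t ⟨g, hg, rfl⟩
  exact hg.sum_le_two_pow_card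

def K1nmColoring (m n : ℕ) : Fin m ⊕ Fin n → ℕ
  | .inl j => (2 ^ n - 1) * 2 ^ (j : ℕ) + if (j : ℕ) = m - 1 then 1 else 0
  | .inr i => 2 ^ (i : ℕ)

theorem K1nmColoring_pos {m n : ℕ} (hn : 1 ≤ n) (v : Fin m ⊕ Fin n) :
    0 < K1nmColoring m n v := by
  have : 1 < 2 ^ n := Nat.one_lt_two_pow (by omega)
  rcases v with j | i
  · exact Nat.add_pos_left (Nat.mul_pos (by omega) (Nat.two_pow_pos _)) _
  · exact Nat.two_pow_pos _

theorem sum_K1nmColoring {m n : ℕ} (hm : 1 ≤ m) :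
    ∑ v, K1nmColoring m n v = (2 ^ n - 1) * 2 ^ m + 1 := by
  have hgeom (k : ℕ) : ∑ i : Fin k, 2 ^ (i : ℕ) = 2 ^ k - 1 := by
    simpa [Fin.sum_univ_eq_sum_range (2 ^ ·)] using Nat.geomSum_eq le_rfl k
  have htop : ∑ j : Fin m, (if (j : ℕ) = m - 1 then 1 else 0) = 1 := by
    rw [Fin.sum_univ_eq_sum_range (fun j => if j = m - 1 then 1 else 0), sum_ite_eq']
    simp only [mem_range, ite_eq_left_iff]
    omega
  simp only [Fintype.sum_sum_type, K1nmColoring, sum_add_distrib, ← mul_sum, hgeom, htop]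
  have : 1 ≤ 2 ^ m := Nat.one_le_two_pow
  zify [this, Nat.one_le_two_pow (n := n)]
  ring

theorem exists_connected_sum_K1nmColoring_eq {m n q r : ℕ} (hm : 1 ≤ m) (hq : q < 2 ^ m)
    (hr : 0 < r) (hr' : r < 2 ^ n) :
    ∃ S : Finset (Fin m ⊕ Fin n), S.Nonempty ∧
      ((K1nm m n).induce (S : Set (Fin m ⊕ Fin n))).Connected ∧
      ∑ v ∈ S, K1nmColoring m n v = (2 ^ n - 1) * q + r + if 2 ^ (m - 1) ≤ q then 1 else 0 := by
  obtain ⟨i, hi⟩ : ∃ i : Fin n, r.testBit i := by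
    by_contra! h
    have : r = 0 := by simpa [h] using (Fin.sum_filter_testBit hr').symm
    omega
  let S := (univ.filter fun j : Fin m => q.testBit j).disjSum
    (univ.filter fun i : Fin n => r.testBit i)
  have hiS : Sum.inr i ∈ S := by simp [S, hi]
  refine ⟨S, ⟨_, hiS⟩, K1nm_induce_connected_of_inr_mem hiS, ?_⟩
  simp only [S, sum_disjSum, K1nmColoring, sum_add_distrib, ← mul_sum,
    Fin.sum_filter_testBit hq, Fin.sum_filter_testBit hr', Fin.sum_filter_testBit_ite_last hm hq]
  ring

theorem isICColoring_K1nmColoring {m n : ℕ} (hm : 1 ≤ m) (hn : 1 ≤ n) :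
    IsICColoring (K1nm m n) (K1nmColoring m n) := by
  refine ⟨K1nmColoring_pos hn, fun k hk1 hk2 => ?_⟩
  rw [sum_K1nmColoring hm] at hk2
  set N := 2 ^ n - 1 with hNdef
  set P := 2 ^ (m - 1) with hPdef
  have hN : 0 < N := Nat.sub_pos_of_lt (Nat.one_lt_two_pow (by omega))
  have hPm : 2 ^ m = 2 * P := by
    rw [hPdef, ← pow_succ', Nat.sub_add_cancel hm]
  have hNm : N * 2 ^ m = 2 * (N * P) := by rw [hPm]; ring
  -- `N * P + 1` is the weight of the last independent vertex: smaller sums are realised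
  -- without it, larger ones with it.
  rcases lt_trichotomy k (N * P + 1) with hlow | rfl | hhigh
  · have hq : (k - 1) / N < P := Nat.div_lt_of_lt_mul (by omega)
    obtain ⟨S, hne, hconn, hsum⟩ := exists_connected_sum_K1nmColoring_eq (n := n) hm
      (q := (k - 1) / N) (r := (k - 1) % N + 1) (by omega) (by omega)
      (by have := Nat.mod_lt (k - 1) hN; omega)
    rw [← hNdef, ← hPdef] at hsum
    refine ⟨S, hne, hconn, ?_⟩
    rw [hsum, if_neg (by omega)]
    have := Nat.div_add_mod (k - 1) N
    omega
  · refine ⟨{Sum.inl ⟨m - 1, by omega⟩}, singleton_nonempty _, ?_, by simp [K1nmColoring, N, P]⟩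
    exact (K1nm m n).induce_connected_of_forall_adj (mem_singleton_self _)
      fun v hv hne => absurd (mem_singleton.mp hv) hne
  · have hq : P ≤ (k - 2) / N := (Nat.le_div_iff_mul_le hN).mpr (by rw [mul_comm]; omega)
    have hq' : (k - 2) / N < 2 ^ m := Nat.div_lt_of_lt_mul (by omega)
    obtain ⟨S, hne, hconn, hsum⟩ := exists_connected_sum_K1nmColoring_eq (n := n) hm
      (q := (k - 2) / N) (r := (k - 2) % N + 1) hq' (by omega)
      (by have := Nat.mod_lt (k - 2) hN; omega)
    rw [← hNdef, ← hPdef] at hsum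
    refine ⟨S, hne, hconn, ?_⟩
    rw [hsum, if_pos hq]
    have := Nat.div_add_mod (k - 2) N
    omega

/-- For all `m ≥ 1` and `n ≥ 1`,
`M(K_{1(n),m}) ≥ 2^{m+n} − 2^m + 1`. -/
theorem stmt_7 (m n : ℕ) (hm : 1 ≤ m) (hn : 1 ≤ n) :
    2 ^ (m + n) - 2 ^ m + 1 ≤ ICIndex (K1nm m n) := by
  have htotal : 2 ^ (m + n) - 2 ^ m + 1 = ∑ v, K1nmColoring m n v := by
    rw [sum_K1nmColoring hm, pow_add, Nat.sub_mul, one_mul, mul_comm]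
  exact htotal ▸ (isICColoring_K1nmColoring hm hn).sum_le_ICIndex
end

section
/- For m ≥ 1 and n ≥ 1, the complete (n+1)-partite graph K_{1(n),m} has exactly 2^{m+n} − 2^m + m nonempty vertex subsets that induce a connected subgraph. -/
/-!
A vertex of the `K_n` part is adjacent to every other vertex, so every vertex set meeting `V_1`
induces a connected graph; a vertex set inside the independent part `V_0` induces a connected
graph only if it is a singleton. Hence the connected sets are the `2^{m+n} - 2^m` sets meeting
`V_1` together with the `m` singletons of `V_0`.
-/

open Finset

namespace SimpleGraph

variable {V : Type*} {G : SimpleGraph V} {s : Set V}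

lemma induce_connected_of_forall_adj_s9 {v : V} (hv : v ∈ s) (hadj : ∀ w ∈ s, w ≠ v → G.Adj v w) :
    (G.induce s).Connected := by
  rw [connected_iff_exists_forall_reachable]
  refine ⟨⟨v, hv⟩, fun ⟨w, hw⟩ => ?_⟩
  by_cases hwv : w = v
  · subst hwv
    rfl
  · exact Adj.reachable (hadj w hw hwv)

lemma IsIndepSet.subsingleton_of_induce_connected (hs : G.IsIndepSet s)
    (hc : (G.induce s).Connected) : s.Subsingleton := by
  have hbot : G.induce s = ⊥ := by
    ext ⟨x, hx⟩ ⟨y, hy⟩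
    simp only [comap_adj, Function.Embedding.subtype_apply, bot_adj, iff_false]
    exact fun h => hs hx hy h.ne h
  rw [hbot, connected_bot_iff] at hc
  exact (Set.subsingleton_coe s).mp hc.1

end SimpleGraph

section JoinBotTop

variable {α β : Type*}

lemma graphJoin_bot_top_induce_connected_iff {s : Set (α ⊕ β)} :
    ((graphJoin (⊥ : SimpleGraph α) (⊤ : SimpleGraph β)).induce s).Connected ↔
      (∃ b, Sum.inr b ∈ s) ∨ ∃ a, s = {Sum.inl a} := by
  constructor
  · intro hc
    refine or_iff_not_imp_left.mpr fun hright => ?_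
    have hleft : ∀ x ∈ s, ∃ a, x = Sum.inl a := by
      rintro (a | b) hx
      · exact ⟨a, rfl⟩
      · exact absurd ⟨b, hx⟩ hright
    have hindep : (graphJoin (⊥ : SimpleGraph α) (⊤ : SimpleGraph β)).IsIndepSet s := by
      intro x hx y hy _
      obtain ⟨a, rfl⟩ := hleft x hx
      obtain ⟨a', rfl⟩ := hleft y hy
      exact id
    obtain ⟨x, hx⟩ := hc.nonempty
    obtain ⟨a, rfl⟩ := hleft x hx
    exact ⟨a, (hindep.subsingleton_of_induce_connected hc).eq_singleton_of_mem hx⟩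
  · rintro (⟨b, hb⟩ | ⟨a, rfl⟩)
    · refine SimpleGraph.induce_connected_of_forall_adj_s9 hb ?_
      rintro (a | b') _ hne
      · trivial
      · exact fun h => hne (congrArg Sum.inr h.symm)
    · exact SimpleGraph.induce_connected_of_forall_adj_s9 rfl fun w hw hne => absurd hw hne

lemma card_filter_exists_inr_mem [Fintype α] [Fintype β]
    [DecidablePred fun S : Finset (α ⊕ β) => ∃ b, Sum.inr b ∈ S] :
    #{S : Finset (α ⊕ β) | ∃ b, Sum.inr b ∈ S} =
      2 ^ (Fintype.card α + Fintype.card β) - 2 ^ Fintype.card α := by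
  have hleft : ({S : Finset (α ⊕ β) | ¬∃ b, Sum.inr b ∈ S} : Finset _) =
      (univ.map Function.Embedding.inl).powerset := by
    ext S
    simp only [mem_filter, mem_univ, true_and, mem_powerset, subset_iff, mem_map,
      Function.Embedding.inl_apply, not_exists]
    constructor
    · rintro h (a | b) hx
      · exact ⟨a, rfl⟩
      · exact absurd hx (h b)
    · intro h b hb
      exact Sum.inl_ne_inr (h hb).choose_spec
  have htotal := card_filter_add_card_filter_not (s := (univ : Finset (Finset (α ⊕ β))))
    (fun S => ∃ b, Sum.inr b ∈ S)
  rw [hleft, card_powerset, card_map, card_univ, card_univ, Fintype.card_finset,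
    Fintype.card_sum] at htotal
  omega

end JoinBotTop

theorem stmt_9_general (m n : ℕ) :
    {S : Finset (Fin m ⊕ Fin n) |
        S.Nonempty ∧ ((K1nm m n).induce (S : Set (Fin m ⊕ Fin n))).Connected}.ncard =
      2 ^ (m + n) - 2 ^ m + m := by
  have hconnected : {S : Finset (Fin m ⊕ Fin n) |
        S.Nonempty ∧ ((K1nm m n).induce (S : Set (Fin m ⊕ Fin n))).Connected} =
      ↑(({S | ∃ b, Sum.inr b ∈ S} : Finset (Finset (Fin m ⊕ Fin n))) ∪
        univ.image fun a => {Sum.inl a}) := by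
    ext S
    rw [Set.mem_ofPred_eq,
      and_iff_right_of_imp fun hc => coe_nonempty.mp (Set.nonempty_coe_sort.mp hc.nonempty),
      K1nm, graphJoin_bot_top_induce_connected_iff]
    simp [eq_comm]
  have hdisjoint : Disjoint ({S | ∃ b, Sum.inr b ∈ S} : Finset (Finset (Fin m ⊕ Fin n)))
      (univ.image fun a => {Sum.inl a}) := by
    simp only [disjoint_left, mem_filter, mem_image]
    rintro _ ⟨-, b, hb⟩ ⟨a, -, rfl⟩
    simp at hb
  rw [hconnected, Set.ncard_coe_finset, card_union_of_disjoint hdisjoint,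
    card_image_of_injective _ fun _ _ h => Sum.inl_injective (singleton_injective h),
    card_filter_exists_inr_mem]
  simp

/-- For `m ≥ 1` and `n ≥ 1`, the graph `K_{1(n),m}` has exactly
`2^{m+n} − 2^m + m` nonempty vertex subsets inducing a connected subgraph. -/
theorem stmt_9 (m n : ℕ) (hm : 1 ≤ m) (hn : 1 ≤ n) :
    {S : Finset (Fin m ⊕ Fin n) |
        S.Nonempty ∧ ((K1nm m n).induce (S : Set (Fin m ⊕ Fin n))).Connected}.ncard =
      2 ^ (m + n) - 2 ^ m + m :=
  stmt_9_general m n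
end

section
/- Let m ≥ 2, n ≥ 2, and let f be a maximal IC-coloring of K_{1(n),m} with vertices listed as u_1, …, u_{m+n} so that f(u_i) < f(u_{i+1}) for all i; set f_0 = 0, f_i = f(u_1) + ⋯ + f(u_i), s_0 = 0, s_i = f(u_i), r_i = s_i − ∑_{j=0}^{i−1} s_j, and k_0 = max{ j : u_j ∈ V_0 }. Suppose S_1 = { i < k_0 : r_i = 1 and u_i ∈ V_0 } is nonempty; let i_1 = min S_1, t = |{ i < i_1 : u_i ∈ V_0 }|, and S_2 = { i ≥ i_1 + 1 : u_i ∈ V_0 and f(u_i) > f_{i−1} − f(u_{i_1}) }. If S_2 is nonempty and i_2 = min S_2, then (as an inequality of rational numbers) f(K_{1(n),m}) ≤ 2^{m+n} − 2^{m+n−2}(1 − 2^{−(i_2−i_1)}) − (2^t − 1)(3 · 2^{m+n−i_1−1} + 2^{m+n−i_2−1}). -/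
/-!
Write `F i = f(u 1) + ⋯ + f(u i)`. The IC property forces `f(u i) ≤ F(i-1) + 1` (otherwise
`F(i-1) + 1` would not be a subset sum), so `F i + 1 ≤ 2 (F(i-1) + 1)`; at each of the `t` vertices
of `V₀` before `u i₁` one even has `r ≤ 0`, which yields `F(i₁-1) + 2^t ≤ 2^(i₁-1)`.

Since `r i₁ = 1`, the only set of weight `f(u i₁)` is `{u i₁}`. A connected set of weight
`f(u i₁) + f(u i₂)` is therefore not `{u i₁, u i₂}` (an independent pair in `V₀`), and by the choice
of `i₂` it cannot lie inside `{u 1, …, u i₂}`; so it contains some `u j` with `j > i₂`, whence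
`f(u (i₂+1)) ≤ f(u i₁) + f(u i₂)`. Across the two steps `i₂ - 1 → i₂ + 1` the quantity `F + 1`
grows to at most `3 (F(i₂-1) + 1) + (F(i₁-1) + 1)` instead of `4 (F(i₂-1) + 1)`, and doubling
elsewhere gives `F(m+n) + 1 ≤ 2^(m+n-i₂-1) (3·2^(i₂-i₁) + 1) (F(i₁-1) + 1)`, which is the claimed
bound.
-/

open Finset

theorem sum_range_eq_sum_Icc_of_eq_zero {M : Type*} [AddCommMonoid M] {s : ℕ → M} (hs0 : s 0 = 0)
    (i : ℕ) : ∑ j ∈ range i, s j = ∑ j ∈ Icc 1 (i - 1), s j := by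
  rcases i with _ | i
  · simp
  · rw [sum_range_succ', hs0, add_zero, Nat.add_sub_cancel, ← Ico_add_one_right_eq_Icc,
      sum_Ico_eq_sum_range]
    simp [add_comm]

section PartialSums

variable {a : ℕ → ℕ}

theorem sum_Icc_add_one_le_two_pow_mul {k l : ℕ} (hkl : k ≤ l)
    (ha : ∀ i ∈ Icc (k + 1) l, a i ≤ ∑ j ∈ Icc 1 (i - 1), a j + 1) :
    ∑ j ∈ Icc 1 l, a j + 1 ≤ 2 ^ (l - k) * (∑ j ∈ Icc 1 k, a j + 1) := by
  induction l, hkl using Nat.le_induction with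
  | base => simp
  | succ l hkl ih =>
    have hl := ha (l + 1) (by simp only [mem_Icc]; omega)
    have ih := ih fun i hi => ha i (by simp only [mem_Icc] at hi ⊢; omega)
    rw [Nat.add_sub_cancel] at hl
    rw [sum_Icc_succ_top (by omega), Nat.sub_add_comm hkl, pow_succ]
    linarith

theorem sum_Icc_add_two_pow_card_le {N : ℕ} {T : Finset ℕ} (hT : T ⊆ Icc 1 N)
    (ha : ∀ i ∈ Icc 1 N, a i ≤ ∑ j ∈ Icc 1 (i - 1), a j + 1)
    (haT : ∀ i ∈ T, a i ≤ ∑ j ∈ Icc 1 (i - 1), a j) :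
    ∑ j ∈ Icc 1 N, a j + 2 ^ #T ≤ 2 ^ N := by
  induction N generalizing T with
  | zero => simp [subset_empty.1 hT]
  | succ N ih =>
    have ih := ih (T := T.erase (N + 1))
      (fun i hi => by
        have hi' := mem_Icc.1 (hT (mem_of_mem_erase hi))
        exact mem_Icc.2 ⟨hi'.1, by have := ne_of_mem_erase hi; omega⟩)
      (fun i hi => ha i (by simp only [mem_Icc] at hi ⊢; omega))
      (fun i hi => haT i (mem_of_mem_erase hi))
    rw [sum_Icc_succ_top (by omega), pow_succ]
    by_cases hN : N + 1 ∈ T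
    · have hlast := haT _ hN
      rw [Nat.add_sub_cancel] at hlast
      rw [← card_erase_add_one hN, pow_succ]
      linarith
    · have hlast := ha (N + 1) (by simp)
      rw [Nat.add_sub_cancel] at hlast
      rw [erase_eq_of_notMem hN] at ih
      linarith [Nat.one_le_two_pow (n := #T)]

theorem sum_Icc_add_one_le_of_apply_add_one_le {N i₁ i₂ : ℕ} (h₁ : 1 ≤ i₁) (h₁₂ : i₁ < i₂)
    (h₂ : i₂ < N) (ha : ∀ i ∈ Icc 1 N, a i ≤ ∑ j ∈ Icc 1 (i - 1), a j + 1)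
    (ha₁ : a i₁ = ∑ j ∈ Icc 1 (i₁ - 1), a j + 1) (ha₂ : a (i₂ + 1) ≤ a i₁ + a i₂) :
    ∑ j ∈ Icc 1 N, a j + 1 ≤
      2 ^ (N - i₂ - 1) * (3 * 2 ^ (i₂ - i₁) + 1) * (∑ j ∈ Icc 1 (i₁ - 1), a j + 1) := by
  set P := ∑ j ∈ Icc 1 (i₁ - 1), a j + 1
  have hgap : ∀ {k l}, k ≤ l → l ≤ N →
      ∑ j ∈ Icc 1 l, a j + 1 ≤ 2 ^ (l - k) * (∑ j ∈ Icc 1 k, a j + 1) := fun hkl hlN =>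
    sum_Icc_add_one_le_two_pow_mul hkl fun i hi => ha i (by simp only [mem_Icc] at hi ⊢; omega)
  have hstart : ∑ j ∈ Icc 1 i₁, a j + 1 = 2 * P := by
    rw [← Nat.sub_add_cancel h₁, sum_Icc_succ_top (by omega), Nat.sub_add_cancel h₁, ha₁]
    ring
  have hmiddle : ∑ j ∈ Icc 1 (i₂ - 1), a j + 1 ≤ 2 ^ (i₂ - i₁) * P := by
    calc _ ≤ 2 ^ (i₂ - 1 - i₁) * (2 * P) := hstart ▸ hgap (by omega) (by omega)
      _ = 2 ^ (i₂ - i₁) * P := by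
        rw [← mul_assoc, ← pow_succ, show i₂ - 1 - i₁ + 1 = i₂ - i₁ by omega]
  have hjump : ∑ j ∈ Icc 1 (i₂ + 1), a j + 1 ≤ (3 * 2 ^ (i₂ - i₁) + 1) * P := by
    have ha₂' := ha i₂ (by simp only [mem_Icc]; omega)
    rw [sum_Icc_succ_top (by omega), ← Nat.sub_add_cancel (by omega : 1 ≤ i₂),
      sum_Icc_succ_top (by omega), Nat.sub_add_cancel (by omega : 1 ≤ i₂)]
    linarith
  calc _ ≤ 2 ^ (N - (i₂ + 1)) * (∑ j ∈ Icc 1 (i₂ + 1), a j + 1) := hgap (by omega) le_rfl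
    _ ≤ _ := by rw [mul_assoc, Nat.sub_sub]; gcongr

end PartialSums

theorem SimpleGraph.adj_of_induce_pair_connected {V : Type*} {G : SimpleGraph V} {x y : V}
    (hxy : x ≠ y) (h : (G.induce {x, y}).Connected) : G.Adj x y := by
  by_contra hadj
  have hbot : G.induce {x, y} = ⊥ := by
    ext ⟨a, ha⟩ ⟨b, hb⟩
    simp only [Set.mem_insert_iff, Set.mem_singleton_iff] at ha hb
    simp only [comap_adj, Function.Embedding.coe_subtype, bot_adj, iff_false]
    rcases ha with rfl | rfl <;> rcases hb with rfl | rfl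
    exacts [G.irrefl, hadj, fun h => hadj h.symm, G.irrefl]
  have hxy' := h.preconnected ⟨x, by simp⟩ ⟨y, by simp⟩
  rw [hbot, reachable_bot] at hxy'
  exact hxy (congrArg Subtype.val hxy')

theorem K1nm_not_adj_inl {m n : ℕ} (x y : Fin m) : ¬ (K1nm m n).Adj (Sum.inl x) (Sum.inl y) :=
  id

section Enumeration

variable {α : Type*} {f : α → ℕ} {u : ℕ → α} {N : ℕ}

theorem sum_le_sum_Icc_of_forall_notMem (hu : Set.SurjOn u (Set.Icc 1 N) Set.univ)
    {S : Finset α} {i : ℕ} (hS : ∀ j, i ≤ j → j ≤ N → u j ∉ S) :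
    ∑ v ∈ S, f v ≤ ∑ j ∈ Icc 1 (i - 1), f (u j) := by
  classical
  calc ∑ v ∈ S, f v ≤ ∑ v ∈ (Icc 1 (i - 1)).image u, f v := by
        refine sum_le_sum_of_subset fun v hv => ?_
        obtain ⟨j, ⟨hj₁, hjN⟩, rfl⟩ := hu (Set.mem_univ v)
        have hji : j < i := by_contra fun h => hS j (not_lt.1 h) hjN hv
        exact mem_image_of_mem u (mem_Icc.2 ⟨hj₁, by omega⟩)
    _ ≤ ∑ j ∈ Icc 1 (i - 1), f (u j) := sum_image_le_of_nonneg fun _ _ => Nat.zero_le _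

variable [Fintype α]

theorem sum_univ_eq_sum_Icc (hu : Set.BijOn u (Set.Icc 1 N) Set.univ) :
    ∑ v, f v = ∑ j ∈ Icc 1 N, f (u j) :=
  (sum_nbij u (fun _ _ => mem_univ _) (by rw [coe_Icc]; exact hu.injOn)
    (by rw [coe_Icc, coe_univ]; exact hu.surjOn) fun _ _ => rfl).symm

variable {G : SimpleGraph α}

theorem IsICColoring.apply_le_sum_Icc_add_one (hf : IsICColoring G f)
    (hu : Set.SurjOn u (Set.Icc 1 N) Set.univ) (hmono : MonotoneOn (f ∘ u) (Set.Icc 1 N))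
    {i : ℕ} (hi : i ∈ Icc 1 N) : f (u i) ≤ ∑ j ∈ Icc 1 (i - 1), f (u j) + 1 := by
  rw [mem_Icc] at hi
  by_contra! hlt
  have htot : ∑ j ∈ Icc 1 (i - 1), f (u j) + 1 ≤ ∑ v, f v :=
    hlt.le.trans (single_le_sum (fun _ _ => Nat.zero_le _) (mem_univ _))
  obtain ⟨S, -, -, hS⟩ := hf.2 _ (Nat.le_add_left 1 _) htot
  have hle := sum_le_sum_Icc_of_forall_notMem (f := f) hu (S := S) (i := i) fun j hij hjN hj => by
    have hjS := single_le_sum (f := f) (fun _ _ => Nat.zero_le _) hj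
    have hij' : f (u i) ≤ f (u j) := hmono ⟨hi.1, hi.2⟩ ⟨by omega, hjN⟩ hij
    omega
  omega

theorem IsICColoring.eq_singleton_of_sum_eq (hf : IsICColoring G f)
    (hu : Set.SurjOn u (Set.Icc 1 N) Set.univ) (hmono : StrictMonoOn (f ∘ u) (Set.Icc 1 N))
    {i : ℕ} (hi : i ∈ Icc 1 N) (hfi : f (u i) = ∑ j ∈ Icc 1 (i - 1), f (u j) + 1)
    {S : Finset α} (hS : ∑ v ∈ S, f v = f (u i)) : S = {u i} := by
  classical
  rw [mem_Icc] at hi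
  have hmem : u i ∈ S := by
    by_contra hnot
    have hle := sum_le_sum_Icc_of_forall_notMem (f := f) hu (S := S) (i := i) fun j hij hjN hj => by
      obtain rfl | hij := hij.eq_or_lt
      · exact hnot hj
      have hjS := single_le_sum (f := f) (fun _ _ => Nat.zero_le _) hj
      have hij' : f (u i) < f (u j) := hmono ⟨hi.1, hi.2⟩ ⟨by omega, hjN⟩ hij
      omega
    omega
  refine eq_singleton_iff_unique_mem.2 ⟨hmem, fun v hv => by_contra fun hvi => ?_⟩
  have hpair : f v + f (u i) ≤ ∑ v ∈ S, f v := by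
    rw [← sum_pair hvi]
    exact sum_le_sum_of_subset (insert_subset hv (singleton_subset_iff.2 hmem))
  have := hf.1 v
  omega

theorem IsICColoring.lt_and_apply_add_one_le (hf : IsICColoring G f)
    (hu : Set.SurjOn u (Set.Icc 1 N) Set.univ) (hmono : StrictMonoOn (f ∘ u) (Set.Icc 1 N))
    {i₁ i₂ : ℕ} (h₁ : 1 ≤ i₁) (h₁₂ : i₁ < i₂) (h₂ : i₂ ≤ N)
    (hf₁ : f (u i₁) = ∑ j ∈ Icc 1 (i₁ - 1), f (u j) + 1) (hadj : ¬ G.Adj (u i₁) (u i₂))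
    (hf₂ : ∑ j ∈ Icc 1 (i₂ - 1), f (u j) < f (u i₁) + f (u i₂)) :
    i₂ < N ∧ f (u (i₂ + 1)) ≤ f (u i₁) + f (u i₂) := by
  classical
  have hne : u i₁ ≠ u i₂ := fun h =>
    (hmono ⟨h₁, by omega⟩ ⟨by omega, h₂⟩ h₁₂).ne (congrArg f h)
  have htot : f (u i₁) + f (u i₂) ≤ ∑ v, f v := by
    rw [← sum_pair hne]
    exact sum_le_sum_of_subset (subset_univ _)
  obtain ⟨S, -, hconn, hS⟩ := hf.2 _ (by have := hf.1 (u i₁); omega) htot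
  obtain ⟨j, hj, hjN, hjS⟩ : ∃ j, i₂ < j ∧ j ≤ N ∧ u j ∈ S := by
    by_contra! hno
    by_cases h₂S : u i₂ ∈ S
    · have hrest : S.erase (u i₂) = {u i₁} :=
        hf.eq_singleton_of_sum_eq hu hmono (mem_Icc.2 ⟨h₁, by omega⟩) hf₁
          (by have := sum_erase_add S f h₂S; omega)
      have hSpair : (S : Set α) = {u i₁, u i₂} := by
        rw [← insert_erase h₂S, hrest, coe_pair, Set.pair_comm]
      exact hadj (SimpleGraph.adj_of_induce_pair_connected hne (hSpair ▸ hconn))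
    · have hle := sum_le_sum_Icc_of_forall_notMem (f := f) hu (S := S) (i := i₂)
        fun j hij hjN hj => (hij.eq_or_lt).elim (fun h => h₂S (h ▸ hj)) fun h => hno j h hjN hj
      omega
  have hnext : f (u (i₂ + 1)) ≤ f (u j) :=
    hmono.monotoneOn ⟨by omega, by omega⟩ ⟨by omega, hjN⟩ hj
  exact ⟨by omega, hnext.trans (hS ▸ single_le_sum (fun _ _ => Nat.zero_le _) hjS)⟩

end Enumeration

theorem two_zpow_bound_eq (M i₁ i₂ : ℤ) (x : ℚ) :
    (2 : ℚ) ^ M - 2 ^ (M - 2) * (1 - 2 ^ (-(i₂ - i₁)))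
        - (x - 1) * (3 * 2 ^ (M - i₁ - 1) + 2 ^ (M - i₂ - 1))
      = 2 ^ (M - i₂ - 1) * (3 * 2 ^ (i₂ - i₁) + 1) * (2 ^ (i₁ - 1) - x + 1) := by
  obtain ⟨c, d, e, rfl, rfl, rfl⟩ : ∃ c d e : ℤ, M = c + d + e + 2 ∧ i₁ = e + 1 ∧ i₂ = d + e + 1 :=
    ⟨M - i₂ - 1, i₂ - i₁, i₁ - 1, by ring, by ring, by ring⟩
  ring_nf
  simp only [zpow_add₀ (two_ne_zero' ℚ), zpow_neg, zpow_ofNat]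
  field_simp
  ring

theorem cast_le_two_zpow_bound {F P t M i₁ i₂ : ℕ} (h₁ : 1 ≤ i₁) (h₁₂ : i₁ ≤ i₂) (h₂ : i₂ < M)
    (hF : F + 1 ≤ 2 ^ (M - i₂ - 1) * (3 * 2 ^ (i₂ - i₁) + 1) * (P + 1))
    (hP : P + 2 ^ t ≤ 2 ^ (i₁ - 1)) :
    (F : ℚ) ≤ 2 ^ (M : ℤ) - 2 ^ ((M : ℤ) - 2) * (1 - 2 ^ (-((i₂ : ℤ) - i₁)))
      - ((2 : ℚ) ^ t - 1) * (3 * 2 ^ ((M : ℤ) - i₁ - 1) + 2 ^ ((M : ℤ) - i₂ - 1)) := by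
  rw [two_zpow_bound_eq, show (M : ℤ) - i₂ - 1 = ((M - i₂ - 1 : ℕ) : ℤ) by omega,
    show (i₂ : ℤ) - i₁ = ((i₂ - i₁ : ℕ) : ℤ) by omega,
    show (i₁ : ℤ) - 1 = ((i₁ - 1 : ℕ) : ℤ) by omega, zpow_natCast, zpow_natCast, zpow_natCast]
  have hF' : (F : ℚ) + 1 ≤ 2 ^ (M - i₂ - 1) * (3 * 2 ^ (i₂ - i₁) + 1) * (P + 1) := by
    exact_mod_cast hF
  have hP' : (P : ℚ) + 2 ^ t ≤ 2 ^ (i₁ - 1) := by exact_mod_cast hP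
  calc (F : ℚ) ≤ 2 ^ (M - i₂ - 1) * (3 * 2 ^ (i₂ - i₁) + 1) * (P + 1) := by linarith
    _ ≤ _ := by gcongr; linarith

theorem stmt_16_general (m n : ℕ)
    (f : Fin m ⊕ Fin n → ℕ) (hf : IsICColoring (K1nm m n) f)
    (u : ℕ → Fin m ⊕ Fin n) (hu : Set.BijOn u (Set.Icc 1 (m + n)) Set.univ)
    (hmono : ∀ i, 1 ≤ i → i + 1 ≤ m + n → f (u i) < f (u (i + 1)))
    (s r : ℕ → ℤ) (hs0 : s 0 = 0)
    (hs : ∀ i, 1 ≤ i → i ≤ m + n → s i = f (u i))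
    (hr : ∀ i, 1 ≤ i → i ≤ m + n → r i = s i - ∑ j ∈ Finset.range i, s j)
    (k₀ : ℕ)
    (i₁ : ℕ)
    (hi₁mem : 1 ≤ i₁ ∧ i₁ < k₀ ∧ r i₁ = 1 ∧ (u i₁).isLeft = true)
    (hi₁min : ∀ j, 1 ≤ j → j < k₀ → r j = 1 → (u j).isLeft = true → i₁ ≤ j)
    (t : ℕ)
    (ht : t = ((Finset.Icc 1 (i₁ - 1)).filter (fun i => (u i).isLeft = true)).card)
    (i₂ : ℕ)
    (hi₂mem : i₁ + 1 ≤ i₂ ∧ i₂ ≤ m + n ∧ (u i₂).isLeft = true ∧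
      (∑ k ∈ Finset.Icc 1 (i₂ - 1), (f (u k) : ℤ)) - f (u i₁) < (f (u i₂) : ℤ)) :
    ((∑ v, f v : ℕ) : ℚ) ≤
      2 ^ ((m : ℤ) + n)
        - 2 ^ ((m : ℤ) + n - 2) * (1 - 2 ^ (-((i₂ : ℤ) - i₁)))
        - ((2 : ℚ) ^ t - 1) *
            (3 * 2 ^ ((m : ℤ) + n - i₁ - 1) + 2 ^ ((m : ℤ) + n - i₂ - 1)) := by
  obtain ⟨hi₁, hi₁k₀, hr₁, hleft₁⟩ := hi₁mem
  obtain ⟨hi₁₂, hi₂, hleft₂, hsum₂⟩ := hi₂mem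
  have hstrict : StrictMonoOn (f ∘ u) (Set.Icc 1 (m + n)) :=
    strictMonoOn_of_lt_add_one Set.ordConnected_Icc fun i _ hi hi' => hmono i hi.1 hi'.2
  have hgap : ∀ i ∈ Icc 1 (m + n), f (u i) ≤ ∑ j ∈ Icc 1 (i - 1), f (u j) + 1 :=
    fun _ => hf.apply_le_sum_Icc_add_one hu.surjOn hstrict.monotoneOn
  have hrf : ∀ i ∈ Icc 1 (m + n), r i = f (u i) - ((∑ j ∈ Icc 1 (i - 1), f (u j) : ℕ) : ℤ) := by
    intro i hi
    rw [mem_Icc] at hi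
    rw [hr i hi.1 hi.2, hs i hi.1 hi.2, sum_range_eq_sum_Icc_of_eq_zero hs0, Nat.cast_sum]
    exact congrArg _ (sum_congr rfl fun j hj => by rw [mem_Icc] at hj; exact hs j hj.1 (by omega))
  have hf₁ : f (u i₁) = ∑ j ∈ Icc 1 (i₁ - 1), f (u j) + 1 := by
    have := hrf i₁ (by simp only [mem_Icc]; omega)
    omega
  have hT : ∀ j ∈ (Icc 1 (i₁ - 1)).filter (fun i => (u i).isLeft = true),
      f (u j) ≤ ∑ k ∈ Icc 1 (j - 1), f (u k) := by
    intro j hj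
    simp only [mem_filter, mem_Icc] at hj
    have hj₁ : r j ≠ 1 := fun h => by have := hi₁min j hj.1.1 (by omega) h hj.2; omega
    have := hrf j (by simp only [mem_Icc]; omega)
    have := hgap j (by simp only [mem_Icc]; omega)
    omega
  obtain ⟨x₁, hx₁⟩ := Sum.isLeft_iff.1 hleft₁
  obtain ⟨x₂, hx₂⟩ := Sum.isLeft_iff.1 hleft₂
  rw [← Nat.cast_sum] at hsum₂
  obtain ⟨hi₂N, hnext⟩ := hf.lt_and_apply_add_one_le hu.surjOn hstrict hi₁ hi₁₂ hi₂ hf₁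
    (hx₁ ▸ hx₂ ▸ K1nm_not_adj_inl x₁ x₂) (by omega)
  have hprefix := sum_Icc_add_two_pow_card_le (a := fun j => f (u j)) (filter_subset _ _)
    (fun i hi => hgap i (by simp only [mem_Icc] at hi ⊢; omega)) hT
  rw [← ht] at hprefix
  have hgrowth := sum_Icc_add_one_le_of_apply_add_one_le (a := fun j => f (u j))
    hi₁ hi₁₂ hi₂N hgap hf₁ hnext
  rw [sum_univ_eq_sum_Icc hu]
  exact_mod_cast cast_le_two_zpow_bound hi₁ (by omega) hi₂N hgrowth hprefix

/-- Setting as in Statement 15, with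
`t = |{ i < i₁ : u i ∈ V₀ }|`: if `S₂ ≠ ∅` and `i₂ = min S₂`, then, in `ℚ`,
`f(K_{1(n),m}) ≤ 2^{m+n} − 2^{m+n−2}(1 − 2^{−(i₂−i₁)})
  − (2^t − 1)(3 · 2^{m+n−i₁−1} + 2^{m+n−i₂−1})`. -/
theorem stmt_16 (m n : ℕ) (hm : 2 ≤ m) (hn : 2 ≤ n)
    (f : Fin m ⊕ Fin n → ℕ) (hf : IsICColoring (K1nm m n) f)
    (hmax : ∑ v, f v = ICIndex (K1nm m n))
    (u : ℕ → Fin m ⊕ Fin n) (hu : Set.BijOn u (Set.Icc 1 (m + n)) Set.univ)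
    (hmono : ∀ i, 1 ≤ i → i + 1 ≤ m + n → f (u i) < f (u (i + 1)))
    (s r : ℕ → ℤ) (hs0 : s 0 = 0)
    (hs : ∀ i, 1 ≤ i → i ≤ m + n → s i = f (u i))
    (hr : ∀ i, 1 ≤ i → i ≤ m + n → r i = s i - ∑ j ∈ Finset.range i, s j)
    (k₀ : ℕ) (hk₀mem : 1 ≤ k₀ ∧ k₀ ≤ m + n ∧ (u k₀).isLeft = true)
    (hk₀max : ∀ j, 1 ≤ j → j ≤ m + n → (u j).isLeft = true → j ≤ k₀)
    (i₁ : ℕ)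
    (hi₁mem : 1 ≤ i₁ ∧ i₁ < k₀ ∧ r i₁ = 1 ∧ (u i₁).isLeft = true)
    (hi₁min : ∀ j, 1 ≤ j → j < k₀ → r j = 1 → (u j).isLeft = true → i₁ ≤ j)
    (t : ℕ)
    (ht : t = ((Finset.Icc 1 (i₁ - 1)).filter (fun i => (u i).isLeft = true)).card)
    (i₂ : ℕ)
    (hi₂mem : i₁ + 1 ≤ i₂ ∧ i₂ ≤ m + n ∧ (u i₂).isLeft = true ∧
      (∑ k ∈ Finset.Icc 1 (i₂ - 1), (f (u k) : ℤ)) - f (u i₁) < (f (u i₂) : ℤ))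
    (hi₂min : ∀ i, i₁ + 1 ≤ i → i ≤ m + n → (u i).isLeft = true →
      (∑ k ∈ Finset.Icc 1 (i - 1), (f (u k) : ℤ)) - f (u i₁) < (f (u i) : ℤ) →
      i₂ ≤ i) :
    ((∑ v, f v : ℕ) : ℚ) ≤
      2 ^ ((m : ℤ) + n)
        - 2 ^ ((m : ℤ) + n - 2) * (1 - 2 ^ (-((i₂ : ℤ) - i₁)))
        - ((2 : ℚ) ^ t - 1) *
            (3 * 2 ^ ((m : ℤ) + n - i₁ - 1) + 2 ^ ((m : ℤ) + n - i₂ - 1)) :=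
  stmt_16_general m n f hf u hu hmono s r hs0 hs hr k₀ i₁ hi₁mem hi₁min t ht i₂ hi₂mem
end
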